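/- arXiv:1805.11542 — 5 statements merged into one kernel-verified Lean document; each statement's English description precedes it below -/
import Mathlib

section
/- Exact marginals under full factorization (Theorem 1, two-variable case): let p be a strictly positive pmf on X × Z₁ × Z₂. Over all pairs of conditional pmfs (q₁(z₁|x), q₂(z₂|x)), the FAVI loss L(q₁,q₂) = −E_{p}[log q₁(z₁|x) + log q₂(z₂|x)] is uniquely minimized by q₁(z₁|x) = p(z₁|x) and q₂(z₂|x) = p(z₂|x), the exact posterior marginals. -/
open Real Finset

lemma gibbs {ι : Type*} [Fintype ι] [Nonempty ι] (w q : ι → ℝ)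
    (hw : ∀ i, 0 < w i) (hq : ∀ i, 0 < q i) (hq1 : ∑ i, q i = 1) :
    (∑ i, w i * Real.log (q i) ≤ ∑ i, w i * Real.log (w i / ∑ j, w j)) ∧
    (∑ i, w i * Real.log (q i) = ∑ i, w i * Real.log (w i / ∑ j, w j) →
      ∀ i, q i = w i / ∑ j, w j) := by
  set W := ∑ j, w j with hWdef
  have hW : 0 < W := Finset.sum_pos (fun i _ => hw i) Finset.univ_nonempty
  have hrw : ∀ i, w i * Real.log (q i) - w i * Real.log (w i / W)
      = w i * Real.log (q i * W / w i) := by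
    intro i
    rw [← mul_sub, ← Real.log_div (hq i).ne' (div_pos (hw i) hW).ne']
    congr 1
    field_simp
  have hterm : ∀ i, w i * Real.log (q i) - w i * Real.log (w i / W) ≤ q i * W - w i := by
    intro i
    have hwi := hw i
    have hqi := hq i
    rw [hrw i]
    have h2 : Real.log (q i * W / w i) ≤ q i * W / w i - 1 :=
      Real.log_le_sub_one_of_pos (by positivity)
    calc w i * Real.log (q i * W / w i) ≤ w i * (q i * W / w i - 1) :=
          mul_le_mul_of_nonneg_left h2 (hw i).le
      _ = q i * W - w i := by field_simp
  have hsum0 : ∑ i, (q i * W - w i) = 0 := by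
    rw [Finset.sum_sub_distrib, ← Finset.sum_mul, hq1, one_mul, ← hWdef, sub_self]
  have hle : ∑ i, (w i * Real.log (q i) - w i * Real.log (w i / W)) ≤ 0 := by
    rw [← hsum0]; exact Finset.sum_le_sum fun i _ => hterm i
  constructor
  · have := hle
    rw [Finset.sum_sub_distrib, sub_nonpos] at this
    exact this
  · intro heq i
    by_contra hne
    have hwi := hw i
    have hqi := hq i
    have hstrict : w i * Real.log (q i) - w i * Real.log (w i / W) < q i * W - w i := by
      rw [hrw i]
      have hne1 : q i * W / w i ≠ 1 := by
        intro h
        apply hne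
        field_simp at h
        rw [eq_div_iff hW.ne']
        linarith
      have h2 : Real.log (q i * W / w i) < q i * W / w i - 1 :=
        Real.log_lt_sub_one_of_pos (by positivity) hne1
      calc w i * Real.log (q i * W / w i) < w i * (q i * W / w i - 1) :=
            (mul_lt_mul_iff_right₀ (hw i)).2 h2
        _ = q i * W - w i := by field_simp
    have hlt : ∑ j, (w j * Real.log (q j) - w j * Real.log (w j / W)) < 0 := by
      rw [← hsum0]
      exact Finset.sum_lt_sum (fun j _ => hterm j) ⟨i, Finset.mem_univ i, hstrict⟩
    rw [Finset.sum_sub_distrib, heq, sub_self] at hlt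
    exact lt_irrefl 0 hlt

lemma split_sum {Z₁ Z₂ : Type*} [Fintype Z₁] [Fintype Z₂]
    (p : Z₁ → Z₂ → ℝ) (f : Z₁ → ℝ) (g : Z₂ → ℝ) :
    ∑ z₁, ∑ z₂, p z₁ z₂ * (f z₁ + g z₂)
      = (∑ z₁, (∑ z₂, p z₁ z₂) * f z₁) + ∑ z₂, (∑ z₁, p z₁ z₂) * g z₂ := by
  simp only [mul_add, Finset.sum_add_distrib]
  congr 1
  · exact Finset.sum_congr rfl fun z₁ _ => by rw [← Finset.sum_mul]
  · rw [Finset.sum_comm]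
    exact Finset.sum_congr rfl fun z₂ _ => by rw [← Finset.sum_mul]

/-- Exact marginals (Theorem 1, two-variable case): the factorized FAVI loss
is uniquely minimized by the exact posterior marginals. -/
theorem favi_exact_marginals_two
    {X Z₁ Z₂ : Type*} [Fintype X] [Fintype Z₁] [Fintype Z₂]
    [Nonempty X] [Nonempty Z₁] [Nonempty Z₂]
    (p : X → Z₁ → Z₂ → ℝ)
    (hp : ∀ x z₁ z₂, 0 < p x z₁ z₂)
    (hpsum : ∑ x, ∑ z₁, ∑ z₂, p x z₁ z₂ = 1) :
    ∀ q₁ : X → Z₁ → ℝ, ∀ q₂ : X → Z₂ → ℝ,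
      (∀ x z₁, 0 < q₁ x z₁) → (∀ x, ∑ z₁, q₁ x z₁ = 1) →
      (∀ x z₂, 0 < q₂ x z₂) → (∀ x, ∑ z₂, q₂ x z₂ = 1) →
      (-∑ x, ∑ z₁, ∑ z₂, p x z₁ z₂ *
          (Real.log ((∑ z₂', p x z₁ z₂') / (∑ z₁', ∑ z₂', p x z₁' z₂'))
            + Real.log ((∑ z₁', p x z₁' z₂) / (∑ z₁', ∑ z₂', p x z₁' z₂'))))
        ≤ (-∑ x, ∑ z₁, ∑ z₂, p x z₁ z₂ * (Real.log (q₁ x z₁) + Real.log (q₂ x z₂))) ∧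
      ((-∑ x, ∑ z₁, ∑ z₂, p x z₁ z₂ * (Real.log (q₁ x z₁) + Real.log (q₂ x z₂)))
          = (-∑ x, ∑ z₁, ∑ z₂, p x z₁ z₂ *
              (Real.log ((∑ z₂', p x z₁ z₂') / (∑ z₁', ∑ z₂', p x z₁' z₂'))
                + Real.log ((∑ z₁', p x z₁' z₂) / (∑ z₁', ∑ z₂', p x z₁' z₂'))))
        → (∀ x z₁, q₁ x z₁ = (∑ z₂', p x z₁ z₂') / (∑ z₁', ∑ z₂', p x z₁' z₂')) ∧
          (∀ x z₂, q₂ x z₂ = (∑ z₁', p x z₁' z₂) / (∑ z₁', ∑ z₂', p x z₁' z₂'))) := by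
  intro q₁ q₂ hq₁ hq₁s hq₂ hq₂s
  set W : X → ℝ := fun x => ∑ z₁, ∑ z₂, p x z₁ z₂ with hWdef
  have hcomm : ∀ x, (∑ z₂, ∑ z₁, p x z₁ z₂) = W x := fun x => Finset.sum_comm
  -- per x, gibbs for q₁
  have h1 : ∀ x,
      (∑ z₁, (∑ z₂, p x z₁ z₂) * Real.log (q₁ x z₁)
        ≤ ∑ z₁, (∑ z₂, p x z₁ z₂) * Real.log ((∑ z₂, p x z₁ z₂) / W x)) ∧
      (∑ z₁, (∑ z₂, p x z₁ z₂) * Real.log (q₁ x z₁)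
        = ∑ z₁, (∑ z₂, p x z₁ z₂) * Real.log ((∑ z₂, p x z₁ z₂) / W x) →
        ∀ z₁, q₁ x z₁ = (∑ z₂, p x z₁ z₂) / W x) := fun x =>
    gibbs (fun z₁ => ∑ z₂, p x z₁ z₂) (q₁ x)
      (fun z₁ => Finset.sum_pos (fun z₂ _ => hp x z₁ z₂) Finset.univ_nonempty)
      (hq₁ x) (hq₁s x)
  have h2 : ∀ x,
      (∑ z₂, (∑ z₁, p x z₁ z₂) * Real.log (q₂ x z₂)
        ≤ ∑ z₂, (∑ z₁, p x z₁ z₂) * Real.log ((∑ z₁, p x z₁ z₂) / W x)) ∧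
      (∑ z₂, (∑ z₁, p x z₁ z₂) * Real.log (q₂ x z₂)
        = ∑ z₂, (∑ z₁, p x z₁ z₂) * Real.log ((∑ z₁, p x z₁ z₂) / W x) →
        ∀ z₂, q₂ x z₂ = (∑ z₁, p x z₁ z₂) / W x) := by
    intro x
    have := gibbs (fun z₂ => ∑ z₁, p x z₁ z₂) (q₂ x)
      (fun z₂ => Finset.sum_pos (fun z₁ _ => hp x z₁ z₂) Finset.univ_nonempty)
      (hq₂ x) (hq₂s x)
    rwa [hcomm x] at this
  -- rewrite the double sums
  have hsplitA : ∀ x, (∑ z₁, ∑ z₂, p x z₁ z₂ * (Real.log (q₁ x z₁) + Real.log (q₂ x z₂)))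
      = (∑ z₁, (∑ z₂, p x z₁ z₂) * Real.log (q₁ x z₁))
        + ∑ z₂, (∑ z₁, p x z₁ z₂) * Real.log (q₂ x z₂) := fun x =>
    split_sum (p x) (fun z₁ => Real.log (q₁ x z₁)) (fun z₂ => Real.log (q₂ x z₂))
  have hsplitB : ∀ x, (∑ z₁, ∑ z₂, p x z₁ z₂ *
        (Real.log ((∑ z₂', p x z₁ z₂') / W x) + Real.log ((∑ z₁', p x z₁' z₂) / W x)))
      = (∑ z₁, (∑ z₂, p x z₁ z₂) * Real.log ((∑ z₂, p x z₁ z₂) / W x))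
        + ∑ z₂, (∑ z₁, p x z₁ z₂) * Real.log ((∑ z₁, p x z₁ z₂) / W x) := fun x =>
    split_sum (p x) (fun z₁ => Real.log ((∑ z₂', p x z₁ z₂') / W x))
      (fun z₂ => Real.log ((∑ z₁', p x z₁' z₂) / W x))
  constructor
  · apply neg_le_neg
    apply Finset.sum_le_sum
    intro x _
    rw [hsplitA x, hsplitB x]
    exact add_le_add (h1 x).1 (h2 x).1
  · intro heq
    have heq' : ∑ x, ((∑ z₁, ∑ z₂, p x z₁ z₂ *
        (Real.log ((∑ z₂', p x z₁ z₂') / W x) + Real.log ((∑ z₁', p x z₁' z₂) / W x)))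
        - ∑ z₁, ∑ z₂, p x z₁ z₂ * (Real.log (q₁ x z₁) + Real.log (q₂ x z₂))) = 0 := by
      rw [Finset.sum_sub_distrib]
      have := neg_injective heq
      rw [this]
      ring
    have hnn : ∀ x ∈ Finset.univ, 0 ≤ (∑ z₁, ∑ z₂, p x z₁ z₂ *
        (Real.log ((∑ z₂', p x z₁ z₂') / W x) + Real.log ((∑ z₁', p x z₁' z₂) / W x)))
        - ∑ z₁, ∑ z₂, p x z₁ z₂ * (Real.log (q₁ x z₁) + Real.log (q₂ x z₂)) := by
      intro x _
      rw [hsplitA x, hsplitB x, sub_nonneg]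
      exact add_le_add (h1 x).1 (h2 x).1
    have hzero := (Finset.sum_eq_zero_iff_of_nonneg hnn).1 heq'
    have hxz : ∀ x, (∑ z₁, (∑ z₂, p x z₁ z₂) * Real.log (q₁ x z₁)
          = ∑ z₁, (∑ z₂, p x z₁ z₂) * Real.log ((∑ z₂, p x z₁ z₂) / W x))
        ∧ (∑ z₂, (∑ z₁, p x z₁ z₂) * Real.log (q₂ x z₂)
          = ∑ z₂, (∑ z₁, p x z₁ z₂) * Real.log ((∑ z₁, p x z₁ z₂) / W x)) := by
      intro x
      have h0 := hzero x (Finset.mem_univ x)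
      rw [hsplitA x, hsplitB x] at h0
      have g1 := (h1 x).1
      have g2 := (h2 x).1
      constructor <;> linarith
    exact ⟨fun x z₁ => (h1 x).2 (hxz x).1 z₁, fun x z₂ => (h2 x).2 (hxz x).2 z₂⟩
end

section
/- Exact marginals under full factorization (Theorem 1, general case): let p be a strictly positive pmf on X × (Z₁ × ⋯ × Z_K). Over all fully factorized conditional variational models q(z|x) = Π_k q_k(z_k|x) with each q_k(·|x) a strictly positive pmf, the FAVI loss −E_{p(x,z)}[Σ_k log q_k(z_k|x)] is uniquely minimized when q_k(z_k|x) = p(z_k|x), the true posterior marginal, for every k and every x. -/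
open Real Finset

/-- Gibbs' inequality with equality case, for strictly positive pmfs on a
finite type. -/
lemma favi_gibbs_aux {α : Type*} [Fintype α] (m q : α → ℝ)
    (hm : ∀ a, 0 < m a) (hq : ∀ a, 0 < q a)
    (hmsum : ∑ a, m a = 1) (hqsum : ∑ a, q a = 1) :
    ∑ a, m a * Real.log (q a) ≤ ∑ a, m a * Real.log (m a) ∧
    (∑ a, m a * Real.log (q a) = ∑ a, m a * Real.log (m a) → ∀ a, q a = m a) := by
  have key : ∀ a, m a * Real.log (q a) - m a * Real.log (m a) ≤ q a - m a := by
    intro a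
    have h1 : Real.log (q a / m a) ≤ q a / m a - 1 :=
      Real.log_le_sub_one_of_pos (div_pos (hq a) (hm a))
    have h2 : Real.log (q a / m a) = Real.log (q a) - Real.log (m a) :=
      Real.log_div (hq a).ne' (hm a).ne'
    rw [h2] at h1
    have h3 := mul_le_mul_of_nonneg_left h1 (hm a).le
    have h4 : m a * (q a / m a - 1) = q a - m a := by
      field_simp [(hm a).ne']
    nlinarith
  have hsum0 : ∑ a, (q a - m a) = 0 := by
    rw [Finset.sum_sub_distrib, hmsum, hqsum]; ring
  constructor
  · have h : ∑ a, (m a * Real.log (q a) - m a * Real.log (m a)) ≤ ∑ a, (q a - m a) :=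
      Finset.sum_le_sum (fun a _ => key a)
    rw [Finset.sum_sub_distrib, hsum0] at h
    linarith
  · intro heq a
    by_contra hne
    have hstrict : m a * Real.log (q a) - m a * Real.log (m a) < q a - m a := by
      have hne1 : q a / m a ≠ 1 := by
        intro h
        exact hne ((div_eq_one_iff_eq (hm a).ne').mp h)
      have h1 : Real.log (q a / m a) < q a / m a - 1 :=
        Real.log_lt_sub_one_of_pos (div_pos (hq a) (hm a)) hne1
      have h2 : Real.log (q a / m a) = Real.log (q a) - Real.log (m a) :=
        Real.log_div (hq a).ne' (hm a).ne'
      rw [h2] at h1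
      have h3 := mul_lt_mul_of_pos_left h1 (hm a)
      have h4 : m a * (q a / m a - 1) = q a - m a := by
        field_simp [(hm a).ne']
      nlinarith
    have h := Finset.sum_lt_sum (fun b _ => key b) ⟨a, Finset.mem_univ a, hstrict⟩
    rw [Finset.sum_sub_distrib, heq, hsum0] at h
    linarith

/-- Exact marginals (Theorem 1, general case): over fully factorized
conditional models, the FAVI loss is uniquely minimized by the true
posterior marginals. -/
theorem favi_exact_marginals_general
    {X : Type*} [Fintype X] [Nonempty X]
    {K : ℕ} (Z : Fin K → Type*) [∀ k, Fintype (Z k)] [∀ k, DecidableEq (Z k)] [∀ k, Nonempty (Z k)]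
    (p : X → (∀ k, Z k) → ℝ)
    (hp : ∀ x z, 0 < p x z)
    (hpsum : ∑ x, ∑ z, p x z = 1) :
    ∀ q : (k : Fin K) → X → Z k → ℝ,
      (∀ k x zk, 0 < q k x zk) → (∀ k x, ∑ zk, q k x zk = 1) →
      (-∑ x, ∑ z, p x z * ∑ k, Real.log
          ((∑ z' : ∀ j, Z j, if z' k = z k then p x z' else 0) / (∑ z', p x z')))
        ≤ (-∑ x, ∑ z, p x z * ∑ k, Real.log (q k x (z k))) ∧
      ((-∑ x, ∑ z, p x z * ∑ k, Real.log (q k x (z k)))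
          = (-∑ x, ∑ z, p x z * ∑ k, Real.log
              ((∑ z' : ∀ j, Z j, if z' k = z k then p x z' else 0) / (∑ z', p x z')))
        → ∀ k x zk, q k x zk
            = (∑ z' : ∀ j, Z j, if z' k = zk then p x z' else 0) / (∑ z', p x z')) := by
  intro q hq hqsum
  classical
  set N : (k : Fin K) → X → Z k → ℝ :=
    fun k x zk => ∑ z' : ∀ j, Z j, if z' k = zk then p x z' else 0 with hNdef
  set S : X → ℝ := fun x => ∑ z, p x z with hSdef
  set m : (k : Fin K) → X → Z k → ℝ := fun k x zk => N k x zk / S x with hmdef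
  have hS : ∀ x, 0 < S x := fun x => Finset.sum_pos (fun z _ => hp x z) Finset.univ_nonempty
  have hNpos : ∀ (k : Fin K) (x : X) (zk : Z k), 0 < N k x zk := by
    intro k x zk
    have hle : p x (Function.update (fun j => Classical.arbitrary (Z j)) k zk) ≤ N k x zk := by
      have h := Finset.single_le_sum
        (f := fun z' : ∀ j, Z j => if z' k = zk then p x z' else 0)
        (fun z' _ => by by_cases h : z' k = zk <;> simp [h, (hp x z').le])
        (Finset.mem_univ (Function.update (fun j => Classical.arbitrary (Z j)) k zk))
      simpa [Function.update_self] using h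
    exact lt_of_lt_of_le (hp x _) hle
  have hNsum : ∀ (k : Fin K) (x : X), ∑ zk, N k x zk = S x := by
    intro k x
    rw [hNdef, hSdef]
    rw [Finset.sum_comm]
    simp
  have hmpos : ∀ (k : Fin K) (x : X) (zk : Z k), 0 < m k x zk :=
    fun k x zk => div_pos (hNpos k x zk) (hS x)
  have hmsum : ∀ (k : Fin K) (x : X), ∑ zk, m k x zk = 1 := by
    intro k x
    rw [hmdef]
    simp only
    rw [← Finset.sum_div, hNsum, div_self (hS x).ne']
  -- reindexing: sum over z of p * f(z k) equals sum over fibers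
  have reindex : ∀ (k : Fin K) (x : X) (f : Z k → ℝ),
      ∑ z, p x z * f (z k) = ∑ zk, N k x zk * f zk := by
    intro k x f
    rw [hNdef]
    simp only [Finset.sum_mul]
    rw [Finset.sum_comm]
    congr 1
    ext z'
    simp [ite_mul]
  -- loss identity for any model r
  have hLoss : ∀ r : (k : Fin K) → X → Z k → ℝ,
      ∑ x, ∑ z, p x z * ∑ k, Real.log (r k x (z k))
        = ∑ x, ∑ k, ∑ zk, N k x zk * Real.log (r k x zk) := by
    intro r
    congr 1
    ext x
    calc ∑ z, p x z * ∑ k, Real.log (r k x (z k))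
        = ∑ z, ∑ k, p x z * Real.log (r k x (z k)) := by
          simp [Finset.mul_sum]
      _ = ∑ k, ∑ z, p x z * Real.log (r k x (z k)) := Finset.sum_comm
      _ = ∑ k, ∑ zk, N k x zk * Real.log (r k x zk) := by
          exact Finset.sum_congr rfl fun k _ => reindex k x (fun zk => Real.log (r k x zk))
  -- the "true" loss in the statement is the loss of m
  have htrue : (∑ x, ∑ z, p x z * ∑ k, Real.log
        ((∑ z' : ∀ j, Z j, if z' k = z k then p x z' else 0) / (∑ z', p x z')))
      = ∑ x, ∑ k, ∑ zk, N k x zk * Real.log (m k x zk) := hLoss m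
  have hNm : ∀ (k : Fin K) (x : X) (zk : Z k), N k x zk = S x * m k x zk := by
    intro k x zk
    rw [hmdef]
    simp only
    field_simp [(hS x).ne']
  -- per-(x,k) Gibbs
  have gibbs : ∀ (x : X) (k : Fin K),
      (∑ zk, m k x zk * Real.log (q k x zk) ≤ ∑ zk, m k x zk * Real.log (m k x zk)) ∧
      ((∑ zk, m k x zk * Real.log (q k x zk) = ∑ zk, m k x zk * Real.log (m k x zk))
        → ∀ zk, q k x zk = m k x zk) :=
    fun x k => favi_gibbs_aux (m k x) (q k x) (hmpos k x) (hq k x) (hmsum k x) (hqsum k x)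
  have hterm : ∀ (x : X) (k : Fin K),
      ∑ zk, N k x zk * Real.log (q k x zk) ≤ ∑ zk, N k x zk * Real.log (m k x zk) := by
    intro x k
    have h := (gibbs x k).1
    have := mul_le_mul_of_nonneg_left h (hS x).le
    calc ∑ zk, N k x zk * Real.log (q k x zk)
        = S x * ∑ zk, m k x zk * Real.log (q k x zk) := by
          rw [Finset.mul_sum]
          exact Finset.sum_congr rfl fun zk _ => by rw [hNm k x zk]; ring
      _ ≤ S x * ∑ zk, m k x zk * Real.log (m k x zk) := this
      _ = ∑ zk, N k x zk * Real.log (m k x zk) := by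
          rw [Finset.mul_sum]
          exact Finset.sum_congr rfl fun zk _ => by rw [hNm k x zk]; ring
  constructor
  · rw [neg_le_neg_iff, hLoss q, htrue]
    exact Finset.sum_le_sum fun x _ => Finset.sum_le_sum fun k _ => hterm x k
  · intro heq k x zk
    rw [neg_inj, hLoss q, htrue] at heq
    -- all termwise inequalities are equalities
    have hxall : ∀ x ∈ (Finset.univ : Finset X),
        ∑ k, ∑ zk, N k x zk * Real.log (q k x zk)
          = ∑ k, ∑ zk, N k x zk * Real.log (m k x zk) := by
      intro x hx
      by_contra hne
      have hlt : ∑ k, ∑ zk, N k x zk * Real.log (q k x zk)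
          < ∑ k, ∑ zk, N k x zk * Real.log (m k x zk) :=
        lt_of_le_of_ne (Finset.sum_le_sum fun k _ => hterm x k) hne
      have := Finset.sum_lt_sum (f := fun x => ∑ k, ∑ zk, N k x zk * Real.log (q k x zk))
        (fun x' _ => Finset.sum_le_sum fun k _ => hterm x' k) ⟨x, hx, hlt⟩
      linarith [heq ▸ this]
    have hkall : ∑ zk, N k x zk * Real.log (q k x zk)
        = ∑ zk, N k x zk * Real.log (m k x zk) := by
      have hx := hxall x (Finset.mem_univ x)
      by_contra hne
      have hlt : ∑ zk, N k x zk * Real.log (q k x zk)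
          < ∑ zk, N k x zk * Real.log (m k x zk) :=
        lt_of_le_of_ne (hterm x k) hne
      have := Finset.sum_lt_sum (f := fun k => ∑ zk, N k x zk * Real.log (q k x zk))
        (fun k' _ => hterm x k') ⟨k, Finset.mem_univ k, hlt⟩
      linarith [hx ▸ this]
    -- convert to gibbs equality
    have hmeq : ∑ zk, m k x zk * Real.log (q k x zk)
        = ∑ zk, m k x zk * Real.log (m k x zk) := by
      have e1 : ∑ zk, N k x zk * Real.log (q k x zk)
          = S x * ∑ zk, m k x zk * Real.log (q k x zk) := by
        rw [Finset.mul_sum]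
        exact Finset.sum_congr rfl fun zk _ => by rw [hNm k x zk]; ring
      have e2 : ∑ zk, N k x zk * Real.log (m k x zk)
          = S x * ∑ zk, m k x zk * Real.log (m k x zk) := by
        rw [Finset.mul_sum]
        exact Finset.sum_congr rfl fun zk _ => by rw [hNm k x zk]; ring
      rw [e1, e2] at hkall
      exact mul_left_cancel₀ (hS x).ne' hkall
    exact (gibbs x k).2 hmeq zk
end

section
/- Consistent marginalization (Theorem 2): let p be a strictly positive pmf on X × Z × Ξ, and consider conditionally independent variational models q(z,ξ|x) = q_z(z|x)·q_ξ(ξ|x). If (q_z*, q_ξ*) minimizes the FAVI loss −E_{p(x,z,ξ)}[log q_z(z|x) + log q_ξ(ξ|x)], then the ξ-marginal of q* equals q_z*(z|x), and q_z* also minimizes the marginalized FAVI loss −E_{p(x,z)}[log q_z(z|x)], where p(x,z) = Σ_ξ p(x,z,ξ). -/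
open Real Finset

/-- Consistent marginalization (Theorem 2): if (q_z*, q_ξ*) minimizes the joint
FAVI loss over conditionally independent models, then the ξ-marginal of the
product equals q_z*, and q_z* minimizes the marginalized FAVI loss. -/
theorem favi_consistent_marginalization
    {X Z Ξ : Type*} [Fintype X] [Fintype Z] [Fintype Ξ]
    [Nonempty X] [Nonempty Z] [Nonempty Ξ]
    (p : X → Z → Ξ → ℝ)
    (hp : ∀ x z ξ, 0 < p x z ξ)
    (hpsum : ∑ x, ∑ z, ∑ ξ, p x z ξ = 1)
    (qz : X → Z → ℝ) (qξ : X → Ξ → ℝ)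
    (hqz : ∀ x z, 0 < qz x z) (hqzsum : ∀ x, ∑ z, qz x z = 1)
    (hqξ : ∀ x ξ, 0 < qξ x ξ) (hqξsum : ∀ x, ∑ ξ, qξ x ξ = 1)
    (hmin : ∀ rz : X → Z → ℝ, ∀ rξ : X → Ξ → ℝ,
      (∀ x z, 0 < rz x z) → (∀ x, ∑ z, rz x z = 1) →
      (∀ x ξ, 0 < rξ x ξ) → (∀ x, ∑ ξ, rξ x ξ = 1) →
      (-∑ x, ∑ z, ∑ ξ, p x z ξ * (Real.log (qz x z) + Real.log (qξ x ξ)))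
        ≤ (-∑ x, ∑ z, ∑ ξ, p x z ξ * (Real.log (rz x z) + Real.log (rξ x ξ)))) :
    (∀ x z, ∑ ξ, qz x z * qξ x ξ = qz x z) ∧
    (∀ rz : X → Z → ℝ, (∀ x z, 0 < rz x z) → (∀ x, ∑ z, rz x z = 1) →
      (-∑ x, ∑ z, (∑ ξ, p x z ξ) * Real.log (qz x z))
        ≤ (-∑ x, ∑ z, (∑ ξ, p x z ξ) * Real.log (rz x z))) := by
  have key : ∀ f : X → Z → ℝ,
      (∑ x, ∑ z, ∑ ξ, p x z ξ * (Real.log (f x z) + Real.log (qξ x ξ)))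
        = (∑ x, ∑ z, (∑ ξ, p x z ξ) * Real.log (f x z))
          + ∑ x, ∑ z, ∑ ξ, p x z ξ * Real.log (qξ x ξ) := by
    intro f
    rw [← Finset.sum_add_distrib]
    refine Finset.sum_congr rfl fun x _ => ?_
    rw [← Finset.sum_add_distrib]
    refine Finset.sum_congr rfl fun z _ => ?_
    simp [mul_add, Finset.sum_add_distrib, Finset.sum_mul]
  constructor
  · intro x z
    rw [← Finset.mul_sum, hqξsum, mul_one]
  · intro rz hrz hrzsum
    have h := hmin rz qξ hrz hrzsum hqξ hqξsum
    rw [key qz, key rz] at h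
    linarith
end

section
/- The minimizer of the block-factorized FAVI loss is the product of true posterior marginals: for a strictly positive pmf p on X × Z × Ξ, the unique minimizer over conditionally independent models q_z(z|x)·q_ξ(ξ|x) of −E_{p(x,z,ξ)}[log(q_z(z|x)q_ξ(ξ|x))] is q_z(z|x) = p(z|x) and q_ξ(ξ|x) = p(ξ|x), even though p(z,ξ|x) need not factorize. -/
open Real Finset

/-- Gibbs' inequality with equality case. -/
lemma gibbs_aux {ι : Type*} [Fintype ι] (a b : ι → ℝ)
    (ha : ∀ i, 0 < a i) (hb : ∀ i, 0 < b i)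
    (hsa : ∑ i, a i = 1) (hsb : ∑ i, b i = 1) :
    ∑ i, a i * Real.log (b i) ≤ ∑ i, a i * Real.log (a i) ∧
    (∑ i, a i * Real.log (b i) = ∑ i, a i * Real.log (a i) → ∀ i, b i = a i) := by
  have key : ∀ i : ι, a i * Real.log (b i) - a i * Real.log (a i) ≤ b i - a i := by
    intro i
    have h1 : Real.log (b i / a i) ≤ b i / a i - 1 :=
      Real.log_le_sub_one_of_pos (div_pos (hb i) (ha i))
    have h2 : a i * Real.log (b i / a i) ≤ a i * (b i / a i - 1) :=
      mul_le_mul_of_nonneg_left h1 (ha i).le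
    rw [Real.log_div (hb i).ne' (ha i).ne'] at h2
    have hane := (ha i).ne'
    have h3 : a i * (b i / a i - 1) = b i - a i := by field_simp
    nlinarith [h2, h3, mul_sub (a i) (Real.log (b i)) (Real.log (a i))]
  have keystrict : ∀ i : ι, b i ≠ a i →
      a i * Real.log (b i) - a i * Real.log (a i) < b i - a i := by
    intro i hne
    have hba : b i / a i ≠ 1 := by
      rw [Ne, div_eq_one_iff_eq (ha i).ne']; exact hne
    have h1 : Real.log (b i / a i) < b i / a i - 1 :=
      Real.log_lt_sub_one_of_pos (div_pos (hb i) (ha i)) hba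
    have h2 : a i * Real.log (b i / a i) < a i * (b i / a i - 1) :=
      (mul_lt_mul_iff_right₀ (ha i)).mpr h1
    rw [Real.log_div (hb i).ne' (ha i).ne'] at h2
    have hane := (ha i).ne'
    have h3 : a i * (b i / a i - 1) = b i - a i := by field_simp
    nlinarith [h2, h3, mul_sub (a i) (Real.log (b i)) (Real.log (a i))]
  have hsum : ∑ i, (a i * Real.log (b i) - a i * Real.log (a i)) ≤ ∑ i, (b i - a i) :=
    Finset.sum_le_sum fun i _ => key i
  rw [Finset.sum_sub_distrib, Finset.sum_sub_distrib, hsa, hsb] at hsum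
  constructor
  · linarith
  · intro heq i
    by_contra hne
    have hlt : ∑ i, (a i * Real.log (b i) - a i * Real.log (a i)) < ∑ i, (b i - a i) :=
      Finset.sum_lt_sum (fun j _ => key j) ⟨i, Finset.mem_univ i, keystrict i hne⟩
    rw [Finset.sum_sub_distrib, Finset.sum_sub_distrib, hsa, hsb, heq] at hlt
    linarith

/-- Decomposition of the factorized loss into two blocks. -/
lemma loss_decomp {X Z Ξ : Type*} [Fintype X] [Fintype Z] [Fintype Ξ]
    (p : X → Z → Ξ → ℝ) (az : X → Z → ℝ) (aξ : X → Ξ → ℝ)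
    (haz : ∀ x z, 0 < az x z) (haξ : ∀ x ξ, 0 < aξ x ξ) :
    ∑ x, ∑ z, ∑ ξ, p x z ξ * Real.log (az x z * aξ x ξ)
      = ∑ x, ((∑ z, (∑ ξ, p x z ξ) * Real.log (az x z))
          + (∑ ξ, (∑ z, p x z ξ) * Real.log (aξ x ξ))) := by
  refine Finset.sum_congr rfl fun x _ => ?_
  have e1 : ∀ z, ∑ ξ, p x z ξ * Real.log (az x z * aξ x ξ)
      = (∑ ξ, p x z ξ) * Real.log (az x z) + ∑ ξ, p x z ξ * Real.log (aξ x ξ) := by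
    intro z
    rw [Finset.sum_mul]
    rw [← Finset.sum_add_distrib]
    refine Finset.sum_congr rfl fun ξ _ => ?_
    rw [Real.log_mul (haz x z).ne' (haξ x ξ).ne', mul_add]
  calc ∑ z, ∑ ξ, p x z ξ * Real.log (az x z * aξ x ξ)
      = ∑ z, ((∑ ξ, p x z ξ) * Real.log (az x z) + ∑ ξ, p x z ξ * Real.log (aξ x ξ)) :=
        Finset.sum_congr rfl fun z _ => e1 z
    _ = (∑ z, (∑ ξ, p x z ξ) * Real.log (az x z))
          + ∑ z, ∑ ξ, p x z ξ * Real.log (aξ x ξ) := Finset.sum_add_distrib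
    _ = (∑ z, (∑ ξ, p x z ξ) * Real.log (az x z))
          + ∑ ξ, (∑ z, p x z ξ) * Real.log (aξ x ξ) := by
        congr 1
        rw [Finset.sum_comm]
        refine Finset.sum_congr rfl fun ξ _ => ?_
        rw [Finset.sum_mul]

/-- The unique minimizer of the block-factorized FAVI loss is the product of
the true posterior marginals. -/
theorem favi_block_minimizer
    {X Z Ξ : Type*} [Fintype X] [Fintype Z] [Fintype Ξ]
    [Nonempty X] [Nonempty Z] [Nonempty Ξ]
    (p : X → Z → Ξ → ℝ)
    (hp : ∀ x z ξ, 0 < p x z ξ)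
    (hpsum : ∑ x, ∑ z, ∑ ξ, p x z ξ = 1) :
    ∀ qz : X → Z → ℝ, ∀ qξ : X → Ξ → ℝ,
      (∀ x z, 0 < qz x z) → (∀ x, ∑ z, qz x z = 1) →
      (∀ x ξ, 0 < qξ x ξ) → (∀ x, ∑ ξ, qξ x ξ = 1) →
      (-∑ x, ∑ z, ∑ ξ, p x z ξ *
          Real.log (((∑ ξ', p x z ξ') / (∑ z', ∑ ξ', p x z' ξ'))
            * ((∑ z', p x z' ξ) / (∑ z', ∑ ξ', p x z' ξ'))))
        ≤ (-∑ x, ∑ z, ∑ ξ, p x z ξ * Real.log (qz x z * qξ x ξ)) ∧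
      ((-∑ x, ∑ z, ∑ ξ, p x z ξ * Real.log (qz x z * qξ x ξ))
          = (-∑ x, ∑ z, ∑ ξ, p x z ξ *
              Real.log (((∑ ξ', p x z ξ') / (∑ z', ∑ ξ', p x z' ξ'))
                * ((∑ z', p x z' ξ) / (∑ z', ∑ ξ', p x z' ξ'))))
        → (∀ x z, qz x z = (∑ ξ', p x z ξ') / (∑ z', ∑ ξ', p x z' ξ')) ∧
          (∀ x ξ, qξ x ξ = (∑ z', p x z' ξ) / (∑ z', ∑ ξ', p x z' ξ'))) := by
  intro qz qξ hqz hqzs hqξ hqξs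
  set N : X → ℝ := fun x => ∑ z, ∑ ξ, p x z ξ with hNdef
  have hN : ∀ x, 0 < N x := fun x =>
    Finset.sum_pos (fun z _ => Finset.sum_pos (fun ξ _ => hp x z ξ) Finset.univ_nonempty)
      Finset.univ_nonempty
  have hPz : ∀ x z, 0 < ∑ ξ, p x z ξ := fun x z =>
    Finset.sum_pos (fun ξ _ => hp x z ξ) Finset.univ_nonempty
  have hPξ : ∀ x ξ, 0 < ∑ z, p x z ξ := fun x ξ =>
    Finset.sum_pos (fun z _ => hp x z ξ) Finset.univ_nonempty
  -- the optimal conditionals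
  set sz : X → Z → ℝ := fun x z => (∑ ξ, p x z ξ) / N x with hszdef
  set sξ : X → Ξ → ℝ := fun x ξ => (∑ z, p x z ξ) / N x with hsξdef
  have hsz : ∀ x z, 0 < sz x z := fun x z => div_pos (hPz x z) (hN x)
  have hsξ : ∀ x ξ, 0 < sξ x ξ := fun x ξ => div_pos (hPξ x ξ) (hN x)
  have hszsum : ∀ x, ∑ z, sz x z = 1 := by
    intro x
    rw [← Finset.sum_div, div_eq_one_iff_eq (hN x).ne']
  have hNalt : ∀ x, N x = ∑ ξ, ∑ z, p x z ξ := fun x => Finset.sum_comm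
  have hsξsum : ∀ x, ∑ ξ, sξ x ξ = 1 := by
    intro x
    rw [← Finset.sum_div, div_eq_one_iff_eq (hN x).ne', ← hNalt]
  -- block-wise Gibbs inequalities
  have blockZ : ∀ x, (∑ z, (∑ ξ, p x z ξ) * Real.log (qz x z)
        ≤ ∑ z, (∑ ξ, p x z ξ) * Real.log (sz x z)) ∧
      ((∑ z, (∑ ξ, p x z ξ) * Real.log (qz x z)
        = ∑ z, (∑ ξ, p x z ξ) * Real.log (sz x z)) → ∀ z, qz x z = sz x z) := by
    intro x
    obtain ⟨hle, heq⟩ := gibbs_aux (sz x) (qz x) (hsz x) (hqz x) (hszsum x) (hqzs x)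
    have e : ∀ (f : Z → ℝ), ∑ z, (∑ ξ, p x z ξ) * f z = N x * ∑ z, sz x z * f z := by
      intro f
      rw [Finset.mul_sum]
      refine Finset.sum_congr rfl fun z _ => ?_
      have hNne := (hN x).ne'
      rw [hszdef]
      field_simp
    constructor
    · rw [e (fun z => Real.log (qz x z)), e (fun z => Real.log (sz x z))]
      exact mul_le_mul_of_nonneg_left hle (hN x).le
    · intro h
      rw [e (fun z => Real.log (qz x z)), e (fun z => Real.log (sz x z))] at h
      exact heq (mul_left_cancel₀ (hN x).ne' h)
  have blockΞ : ∀ x, (∑ ξ, (∑ z, p x z ξ) * Real.log (qξ x ξ)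
        ≤ ∑ ξ, (∑ z, p x z ξ) * Real.log (sξ x ξ)) ∧
      ((∑ ξ, (∑ z, p x z ξ) * Real.log (qξ x ξ)
        = ∑ ξ, (∑ z, p x z ξ) * Real.log (sξ x ξ)) → ∀ ξ, qξ x ξ = sξ x ξ) := by
    intro x
    obtain ⟨hle, heq⟩ := gibbs_aux (sξ x) (qξ x) (hsξ x) (hqξ x) (hsξsum x) (hqξs x)
    have e : ∀ (f : Ξ → ℝ), ∑ ξ, (∑ z, p x z ξ) * f ξ = N x * ∑ ξ, sξ x ξ * f ξ := by
      intro f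
      rw [Finset.mul_sum]
      refine Finset.sum_congr rfl fun ξ _ => ?_
      have hNne := (hN x).ne'
      rw [hsξdef]
      field_simp
    constructor
    · rw [e (fun ξ => Real.log (qξ x ξ)), e (fun ξ => Real.log (sξ x ξ))]
      exact mul_le_mul_of_nonneg_left hle (hN x).le
    · intro h
      rw [e (fun ξ => Real.log (qξ x ξ)), e (fun ξ => Real.log (sξ x ξ))] at h
      exact heq (mul_left_cancel₀ (hN x).ne' h)
  -- rewrite both losses in decomposed form
  have dq := loss_decomp p qz qξ hqz hqξ
  have ds := loss_decomp p sz sξ hsz hsξ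
  have hstar_eq : ∑ x, ∑ z, ∑ ξ, p x z ξ *
      Real.log (((∑ ξ', p x z ξ') / (∑ z', ∑ ξ', p x z' ξ'))
        * ((∑ z', p x z' ξ) / (∑ z', ∑ ξ', p x z' ξ')))
      = ∑ x, ∑ z, ∑ ξ, p x z ξ * Real.log (sz x z * sξ x ξ) := rfl
  have hxle : ∀ x ∈ Finset.univ, ((∑ z, (∑ ξ, p x z ξ) * Real.log (qz x z))
        + (∑ ξ, (∑ z, p x z ξ) * Real.log (qξ x ξ)))
      ≤ ((∑ z, (∑ ξ, p x z ξ) * Real.log (sz x z))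
        + (∑ ξ, (∑ z, p x z ξ) * Real.log (sξ x ξ))) :=
    fun x _ => add_le_add (blockZ x).1 (blockΞ x).1
  constructor
  · rw [hstar_eq, dq, ds]
    exact neg_le_neg (Finset.sum_le_sum hxle)
  · intro hEq
    rw [hstar_eq, dq, ds, neg_inj] at hEq
    have hall := (Finset.sum_eq_sum_iff_of_le hxle).mp hEq
    constructor
    · intro x z
      have h := hall x (Finset.mem_univ x)
      have h1 : ∑ z, (∑ ξ, p x z ξ) * Real.log (qz x z)
          = ∑ z, (∑ ξ, p x z ξ) * Real.log (sz x z) := by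
        have := (blockZ x).1
        have := (blockΞ x).1
        linarith
      exact (blockZ x).2 h1 z
    · intro x ξ
      have h := hall x (Finset.mem_univ x)
      have h1 : ∑ ξ, (∑ z, p x z ξ) * Real.log (qξ x ξ)
          = ∑ ξ, (∑ z, p x z ξ) * Real.log (sξ x ξ) := by
        have := (blockZ x).1
        have := (blockΞ x).1
        linarith
      exact (blockΞ x).2 h1 ξ
end

section
/- Failure of consistent marginalization for reverse KL: there exist a finite probability space and a joint pmf p(z,ξ) (conditioning on a trivial x) such that the product of marginals p(z)p(ξ) is NOT a minimizer over product distributions q_z(z)q_ξ(ξ) of the reverse KL divergence KL(q_z·q_ξ ‖ p); i.e. there is a product distribution q with KL(q ‖ p) < KL(p_z ⊗ p_ξ ‖ p). -/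
open Real Finset

/-- Failure of consistent marginalization for reverse KL: there exist a strictly
positive pmf p on Bool × Bool and a product distribution q_z ⊗ q_ξ whose reverse
KL to p is strictly smaller than that of the product of the marginals of p. -/
theorem reverse_kl_marginalization_fails :
    ∃ p : Bool × Bool → ℝ, (∀ zξ, 0 < p zξ) ∧ (∑ zξ, p zξ = 1) ∧
    ∃ qz : Bool → ℝ, ∃ qξ : Bool → ℝ,
      (∀ z, 0 < qz z) ∧ (∑ z, qz z = 1) ∧
      (∀ ξ, 0 < qξ ξ) ∧ (∑ ξ, qξ ξ = 1) ∧
      (∑ zξ : Bool × Bool, qz zξ.1 * qξ zξ.2 *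
          Real.log ((qz zξ.1 * qξ zξ.2) / p zξ))
        < ∑ zξ : Bool × Bool,
            (∑ ξ', p (zξ.1, ξ')) * (∑ z', p (z', zξ.2)) *
              Real.log (((∑ ξ', p (zξ.1, ξ')) * (∑ z', p (z', zξ.2))) / p zξ) := by
  refine ⟨fun zξ => if zξ.1 = zξ.2 then 0.49 else 0.01, ?_, ?_,
    (fun z => if z then 0.01 else 0.99), (fun ξ => if ξ then 0.01 else 0.99),
    ?_, ?_, ?_, ?_, ?_⟩
  · rintro ⟨z, ξ⟩; dsimp only; split <;> norm_num
  · simp [Fintype.sum_prod_type]; norm_num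
  · intro z; cases z <;> norm_num
  · simp; norm_num
  · intro ξ; cases ξ <;> norm_num
  · simp; norm_num
  · simp only [Fintype.sum_prod_type, Fintype.sum_bool]
    norm_num
    -- key log bounds
    have l1 : Real.log (0.99 * 0.99 / 0.49) ≤ 0.99 * 0.99 / 0.49 - 1 :=
      Real.log_le_sub_one_of_pos (by norm_num)
    have l2 : Real.log (0.99 * 0.01 / 0.01) ≤ 0 := by
      apply Real.log_nonpos <;> norm_num
    have l3 : Real.log (0.01 * 0.99 / 0.01) ≤ 0 := by
      apply Real.log_nonpos <;> norm_num
    have l4 : Real.log (0.01 * 0.01 / 0.49) ≤ 0 := by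
      apply Real.log_nonpos <;> norm_num
    have l5 : -(24/25 : ℝ) ≤ Real.log (0.5 * 0.5 / 0.49) := by
      have h := Real.log_le_sub_one_of_pos (x := (0.49 / (0.5 * 0.5) : ℝ)) (by norm_num)
      have : Real.log (0.5 * 0.5 / 0.49) = - Real.log (0.49 / (0.5 * 0.5)) := by
        rw [← Real.log_inv]; norm_num
      rw [this]; nlinarith [h]
    have l6 : (4 : ℝ) * Real.log 2 + 9/25 ≤ Real.log (0.5 * 0.5 / 0.01) := by
      have h25 : (0.5 * 0.5 / 0.01 : ℝ) = 16 * (25/16) := by norm_num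
      have h16 : Real.log (16 : ℝ) = 4 * Real.log 2 := by
        have : (16 : ℝ) = 2 ^ (4 : ℕ) := by norm_num
        rw [this, Real.log_pow]; push_cast; ring
      have h := Real.log_le_sub_one_of_pos (x := (16/25 : ℝ)) (by norm_num)
      have hinv : Real.log ((25:ℝ)/16) = - Real.log ((16:ℝ)/25) := by
        rw [← Real.log_inv]; norm_num
      rw [h25, Real.log_mul (by norm_num) (by norm_num), h16, hinv]
      linarith
    have hlog2 : (0.6931471803 : ℝ) < Real.log 2 := Real.log_two_gt_d9
    nlinarith [l1, l2, l3, l4, l5, l6, hlog2]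
end
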